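/- With the Jackson damping coefficients ρ_j = [(m+2-j)cos(jπ/(m+2)) + sin(jπ/(m+2))cot(π/(m+2))]/(m+2) for j = 0,...,m, one has ρ_0 = 1 and 1 - ρ_1 ≤ π²/(2(m+2)²) for all m ≥ 1. -/

import Mathlib

open Real

/-- The Jackson coefficient `ρ_j` of the kernel of order `m`, with `N = m + 2`. -/
noncomputable def jacksonCoeff (N j : ℝ) : ℝ :=
  ((N - j) * cos (j * π / N) + sin (j * π / N) * (cos (π / N) / sin (π / N))) / N

theorem jacksonCoeff_zero {N : ℝ} (hN : N ≠ 0) : jacksonCoeff N 0 = 1 := by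
  simp [jacksonCoeff, hN]

theorem jacksonCoeff_one {N : ℝ} (hsin : sin (π / N) ≠ 0) : jacksonCoeff N 1 = cos (π / N) := by
  -- `π / 0 = 0` in Lean, so `N = 0` would make `sin (π / N)` vanish.
  have hN : N ≠ 0 := by
    rintro rfl
    simp at hsin
  unfold jacksonCoeff
  field_simp
  ring

theorem sin_pi_div_pos {N : ℝ} (hN : 1 < N) : 0 < sin (π / N) :=
  sin_pos_of_pos_of_lt_pi (div_pos pi_pos (by linarith)) (div_lt_self pi_pos hN)

theorem one_sub_jacksonCoeff_one_le {N : ℝ} (hN : 1 < N) :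
    1 - jacksonCoeff N 1 ≤ π ^ 2 / (2 * N ^ 2) := by
  rw [jacksonCoeff_one (sin_pi_div_pos hN).ne']
  have hcos := one_sub_sq_div_two_le_cos (x := π / N)
  rw [div_pow] at hcos
  linarith [show π ^ 2 / N ^ 2 / 2 = π ^ 2 / (2 * N ^ 2) by ring]

/-- For the Jackson damping coefficients
`ρ_j = [(m+2-j)cos(jπ/(m+2)) + sin(jπ/(m+2))cot(π/(m+2))]/(m+2)`, one has `ρ_0 = 1` and
`1 - ρ_1 ≤ π²/(2(m+2)²)` for all `m ≥ 1`. -/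
theorem jackson_coefficients_bounds (m : ℕ) (hm : 1 ≤ m) (ρ : ℕ → ℝ)
    (hρ : ∀ j ≤ m, ρ j = (((m : ℝ) + 2 - j) * Real.cos (j * Real.pi / (m + 2))
        + Real.sin (j * Real.pi / (m + 2))
          * (Real.cos (Real.pi / (m + 2)) / Real.sin (Real.pi / (m + 2)))) / ((m : ℝ) + 2)) :
    ρ 0 = 1 ∧ 1 - ρ 1 ≤ Real.pi ^ 2 / (2 * ((m : ℝ) + 2) ^ 2) := by
  have hρ' : ∀ j ≤ m, ρ j = jacksonCoeff ((m : ℝ) + 2) j := hρ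
  have hN : (1 : ℝ) < m + 2 := by linarith [m.cast_nonneg (α := ℝ)]
  refine ⟨?_, ?_⟩
  · rw [hρ' 0 m.zero_le, Nat.cast_zero]
    exact jacksonCoeff_zero (by linarith)
  · rw [hρ' 1 hm, Nat.cast_one]
    exact one_sub_jacksonCoeff_one_le hN
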